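/- Let S be a regular semigroup and φ : 𝒢 → S¹ a skeleton mapping. Then for every g ∈ 𝒢^5 with ↑(g) ≥ 2, the elements g^{φ,l} = (g^cφ)((g^{la})'φ)(g^lφ)(g^{la}φ) and g^{φ,r} = ((g^{ra})'φ)(g^rφ)(g^{ra}φ)(g^cφ) are idempotents of S. -/
import Mathlib


set_option autoImplicit false

universe u v

namespace Paper

/-- Anchors: `A = X ∪ X' ∪ {1}`. -/
inductive Anchor (X : Type u) : Type u where
  | one : Anchor X
  | pos : X → Anchor X
  | neg : X → Anchor X

namespace Anchor

/-- The involution `'` on anchors. -/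
def inv {X : Type u} : Anchor X → Anchor X
  | .one => .one
  | .pos x => .neg x
  | .neg x => .pos x

end Anchor

/-- Formal expressions for the `5`-tuples: `one` is `1`, `base x` is `g_{xx'}`, and
`node l a c b r` is the tuple `(l, a, c, b, r)`. -/
inductive G5 (X : Type u) : Type u where
  | one : G5 X
  | base : X → G5 X
  | node : G5 X → Anchor X → G5 X → Anchor X → G5 X → G5 X

namespace G5

variable {X : Type u}

/-- left entry `g^l` -/
def lt : G5 X → G5 X
  | .node l _ _ _ _ => l
  | _ => .one

/-- right entry `g^r` -/
def rt : G5 X → G5 X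
  | .node _ _ _ _ r => r
  | _ => .one

/-- middle entry `g^c` -/
def ct : G5 X → G5 X
  | .node _ _ c _ _ => c
  | _ => .one

/-- left anchor `g^{la}` -/
def la : G5 X → Anchor X
  | .node _ a _ _ _ => a
  | _ => .one

/-- right anchor `g^{ra}` -/
def ra : G5 X → Anchor X
  | .node _ _ _ b _ => b
  | .base x => .neg x
  | .one => .one

/-- the height `↑(g)` -/
def ht : G5 X → ℕ
  | .one => 0
  | .base _ => 1
  | .node l _ _ _ _ => ht l + 1

/-- membership in `𝒢_{i,e}` -/
inductive MemE : G5 X → ℕ → Prop where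
  | base (x : X) : MemE (.base x) 1
  | stepL {g : G5 X} {i : ℕ} (h : MemE g i) :
      MemE (.node g g.la.inv g.lt g.ra.inv g) (i + 1)
  | stepR {g : G5 X} {i : ℕ} (h : MemE g i) :
      MemE (.node g g.ra.inv g.lt g.la.inv g) (i + 1)

mutual
  /-- membership in `𝒢_{i,d}` -/
  inductive MemD : G5 X → ℕ → Prop where
    | mk {l c r : G5 X} {a b : Anchor X} {i : ℕ}
        (hl : Mem l (i + 1)) (hc : Mem c i) (hr : Mem r (i + 1)) (hne : l ≠ r)
        (hla : (c = l.lt ∧ a = l.la.inv) ∨ (c = l.rt ∧ a = l.ra.inv))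
        (hrb : (c = r.lt ∧ b = r.la.inv) ∨ (c = r.rt ∧ b = r.ra.inv)) :
        MemD (.node l a c b r) (i + 2)

  /-- membership in `𝒢_i` (with `𝒢_0 = {1}` and `𝒢_i = 𝒢_{i,e} ∪ 𝒢_{i,d}` for `i ≥ 1`) -/
  inductive Mem : G5 X → ℕ → Prop where
    | one : Mem .one 0
    | ofE {g : G5 X} {i : ℕ} (h : MemE g i) : Mem g i
    | ofD {g : G5 X} {i : ℕ} (h : MemD g i) : Mem g i
end

/-- `g ∈ 𝒢' = 𝒢^5 ∪ {1}` -/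
def InG' (g : G5 X) : Prop := ∃ i, Mem g i

/-- `g ∈ 𝒢^5 = ⋃_{i ≥ 1} 𝒢_i` -/
def IsTup (g : G5 X) : Prop := ∃ i, 1 ≤ i ∧ Mem g i

end G5

/-- The alphabet `𝒢 = 𝒢^5 ∪ A` (the symbol `1` is the anchor `1`). -/
def Letter (X : Type u) : Type u := Anchor X ⊕ {g : G5 X // g.IsTup}

/-- `𝒢⁺`, the free semigroup on `𝒢`. -/
abbrev W (X : Type u) := FreeSemigroup (Letter X)

/-- the one-letter word given by an anchor -/
def wA {X : Type u} (a : Anchor X) : W X := FreeSemigroup.of (Sum.inl a)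

open Classical in
/-- the one-letter word given by an element of `𝒢'` (the element `1` of `𝒢'` is the
same letter as the anchor `1`) -/
noncomputable def wG {X : Type u} (g : G5 X) : W X :=
  if h : g.IsTup then FreeSemigroup.of (Sum.inr ⟨g, h⟩) else wA Anchor.one

/-- the three-letter word `g^L = (g^{la})' g^l g^{la}` -/
noncomputable def wL {X : Type u} (g : G5 X) : W X := wA g.la.inv * wG g.lt * wA g.la

/-- the three-letter word `g^R = (g^{ra})' g^r g^{ra}` -/
noncomputable def wR {X : Type u} (g : G5 X) : W X := wA g.ra.inv * wG g.rt * wA g.ra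

/-- The generating pairs of the congruence `ρ`. -/
inductive Rel {X : Type u} : W X → W X → Prop where
  | xinvx (x : X) : Rel (wA (.pos x) * wA (.neg x) * wA (.pos x)) (wA (.pos x))
  | invxinv (x : X) : Rel (wA (.neg x) * wA (.pos x) * wA (.neg x)) (wA (.neg x))
  | gbase (x : X) : Rel (wG (.base x)) (wA (.pos x) * wA (.neg x))
  | one_mul {g : G5 X} (h : g.InG') : Rel (wA .one * wG g) (wG g)
  | mul_one {g : G5 X} (h : g.InG') : Rel (wG g * wA .one) (wG g)
  | idem {g : G5 X} (h : g.InG') : Rel (wG g * wG g) (wG g)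
  | cLg {g : G5 X} {i : ℕ} (h : G5.Mem g i) (h2 : 2 ≤ i) :
      Rel (wG g.ct * wL g * wG g) (wG g)
  | gRc {g : G5 X} {i : ℕ} (h : G5.Mem g i) (h2 : 2 ≤ i) :
      Rel (wG g * wR g * wG g.ct) (wG g)
  | RgL {g : G5 X} {i : ℕ} (h : G5.Mem g i) (h2 : 2 ≤ i) :
      Rel (wR g * wG g * wL g) (wR g * wG g.ct * wL g)

/-- The congruence `ρ` generated by `Rel`. -/
def rho (X : Type u) : Con (W X) := conGen Rel

/-- `F°(X) = 𝒢⁺/ρ`. -/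
abbrev Fo (X : Type u) := (rho X).Quotient

/-- `[u]`, the `ρ`-class of a word `u ∈ 𝒢⁺`. -/
def cl {X : Type u} (u : W X) : Fo X := u

/-- left anchored triplet -/
def LeftAnch {X : Type u} (g1 : G5 X) (a : Anchor X) (g2 : G5 X) : Prop :=
  (g1 = g2.lt ∧ a = g2.la) ∨ (g1 = g2.rt ∧ a = g2.ra)

/-- right anchored triplet -/
def RightAnch {X : Type u} (g1 : G5 X) (a : Anchor X) (g2 : G5 X) : Prop :=
  (g2 = g1.lt ∧ a = g1.la.inv) ∨ (g2 = g1.rt ∧ a = g1.ra.inv)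

/-- anchored triplet -/
def Anch {X : Type u} (g1 : G5 X) (a : Anchor X) (g2 : G5 X) : Prop :=
  LeftAnch g1 a g2 ∨ RightAnch g1 a g2

/-- A (potential) landscape `g₀a₁g₁⋯aₙgₙ`, recorded as its first letter `g₀` together
with the list of pairs `(a₁,g₁), …, (aₙ,gₙ)`. -/
structure Landscape (X : Type u) : Type u where
  head : G5 X
  tail : List (Anchor X × G5 X)

/-- last letter of `g :: (map snd l)` -/
def endAt {X : Type u} (g : G5 X) (l : List (Anchor X × G5 X)) : G5 X :=
  (l.map Prod.snd).getLastD g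

/-- every consecutive triplet is anchored -/
def ChainAnch {X : Type u} : G5 X → List (Anchor X × G5 X) → Prop
  | _, [] => True
  | g, (a, h) :: rest => Anch g a h ∧ ChainAnch h rest

/-- heights increase by one at each step -/
def ChainUp {X : Type u} : G5 X → List (Anchor X × G5 X) → Prop
  | _, [] => True
  | g, (_, h) :: rest => G5.ht h = G5.ht g + 1 ∧ ChainUp h rest

/-- heights decrease by one at each step -/
def ChainDown {X : Type u} : G5 X → List (Anchor X × G5 X) → Prop
  | _, [] => True
  | g, (_, h) :: rest => G5.ht h + 1 = G5.ht g ∧ ChainDown h rest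

/-- the maximal ascending prefix -/
def upPre {X : Type u} : G5 X → List (Anchor X × G5 X) → List (Anchor X × G5 X)
  | _, [] => []
  | g, (a, h) :: rest => if G5.ht h = G5.ht g + 1 then (a, h) :: upPre h rest else []

namespace Landscape

variable {X : Type u}

/-- the letters subsequence `g₀g₁⋯gₙ` -/
def letters (L : Landscape X) : List (G5 X) := L.head :: L.tail.map Prod.snd

/-- the anchors subsequence `a₁⋯aₙ` -/
def anchors (L : Landscape X) : List (Anchor X) := L.tail.map Prod.fst

/-- the word `g₀a₁g₁⋯aₙgₙ ∈ 𝒢⁺` -/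
noncomputable def word (L : Landscape X) : W X :=
  L.tail.foldl (fun w p => w * wA p.1 * wG p.2) (wG L.head)

/-- the last letter `gₙ` -/
def last (L : Landscape X) : G5 X := endAt L.head L.tail

/-- `L` is a landscape: all letters in `𝒢'` and all triplets anchored -/
def IsLandscape (L : Landscape X) : Prop :=
  (∀ g ∈ L.letters, g.InG') ∧ ChainAnch L.head L.tail

/-- `L` is an uphill -/
def IsUphill (L : Landscape X) : Prop := L.IsLandscape ∧ ChainUp L.head L.tail

/-- `L` is a downhill -/
def IsDownhill (L : Landscape X) : Prop := L.IsLandscape ∧ ChainDown L.head L.tail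

/-- `L` is an uphill followed by a downhill -/
def IsUpDown (L : Landscape X) : Prop :=
  L.IsLandscape ∧ ∃ utl dtl, L.tail = utl ++ dtl ∧
    ChainUp L.head utl ∧ ChainDown (endAt L.head utl) dtl

/-- `L` is a mountain -/
def IsMountain (L : Landscape X) : Prop :=
  L.IsLandscape ∧ L.head = G5.one ∧
    (L.tail = [] ∨
      ∃ utl dtl, L.tail = utl ++ dtl ∧ utl ≠ [] ∧ dtl ≠ [] ∧
        ChainUp L.head utl ∧ ChainDown (endAt L.head utl) dtl ∧ L.last = G5.one)

/-- `λ_l(L)`, the maximal uphill prefix -/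
def lamL (L : Landscape X) : Landscape X := ⟨L.head, upPre L.head L.tail⟩

/-- landscape from a list of letters and a list of anchors -/
def mk' (gs : List (G5 X)) (as : List (Anchor X)) : Landscape X :=
  ⟨gs.headD G5.one, as.zip gs.tail⟩

/-- the reverse landscape `L⃖ = gₙaₙ'g_{n-1}⋯a₁'g₀` -/
def rev (L : Landscape X) : Landscape X :=
  mk' L.letters.reverse (L.anchors.reverse.map Anchor.inv)

/-- `λ_r(L)`, the maximal downhill suffix -/
def lamR (L : Landscape X) : Landscape X := L.rev.lamL.rev

/-- the peak `κ(L)` of a mountain -/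
def peak (L : Landscape X) : G5 X := L.lamL.last

/-- the word of `L` with its first letter removed -/
noncomputable def tailWord (L : Landscape X) : W X :=
  match L.tail with
  | [] => wA Anchor.one
  | (a, h) :: rest => rest.foldl (fun w p => w * wA p.1 * wG p.2) (wA a * wG h)

/-- `L * M` : the concatenation of the two words without repeating the common letter
`L.last = M.head` at the junction -/
noncomputable def star (L M : Landscape X) : W X :=
  match M.tail with
  | [] => L.word
  | _ :: _ => L.word * M.tailWord

end Landscape

/-- the ground `ε(g)` of `g ∈ 𝒢'` -/
def ground {X : Type u} : G5 X → Set (G5 X)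
  | .one => {G5.one}
  | .base x => {G5.one, G5.base x}
  | .node l a c b r => ground l ∪ {G5.node l a c b r} ∪ ground r

/-- the ground `ε(L)` of a landscape -/
def Landscape.grd {X : Type u} (L : Landscape X) : Set (G5 X) :=
  {h | ∃ g ∈ L.letters, h ∈ ground g}

section Green

variable {X : Type u}

/-- `s ≤_R t`, i.e. `sM ⊆ tM` -/
def leR (s t : Fo X) : Prop := ∀ z : Fo X, (∃ m, z = s * m) → ∃ m, z = t * m

/-- `s ≤_L t`, i.e. `Ms ⊆ Mt` -/
def leL (s t : Fo X) : Prop := ∀ z : Fo X, (∃ m, z = m * s) → ∃ m, z = m * t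

/-- `s ≤_J t`, i.e. `MsM ⊆ MtM` -/
def leJ (s t : Fo X) : Prop :=
  ∀ z : Fo X, (∃ m m', z = m * s * m') → ∃ m m', z = m * t * m'

/-- Green's relation `R` -/
def RRel (s t : Fo X) : Prop := leR s t ∧ leR t s

/-- Green's relation `L` -/
def LRel (s t : Fo X) : Prop := leL s t ∧ leL t s

/-- Green's relation `J` -/
def JRel (s t : Fo X) : Prop := leJ s t ∧ leJ t s

/-- Green's relation `H` -/
def HRel (s t : Fo X) : Prop := RRel s t ∧ LRel s t

/-- Green's relation `D = R ∘ L` -/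
def DRel (s t : Fo X) : Prop := ∃ w, RRel s w ∧ LRel w t

end Green

/-- `u` is a prefix of `v` -/
def WPrefix {X : Type u} (u v : W X) : Prop := u = v ∨ ∃ w, u * w = v

/-- `u` is a suffix of `v` -/
def WSuffix {X : Type u} (u v : W X) : Prop := u = v ∨ ∃ w, w * u = v

/-- the sandwich set `S(e,f)` of two idempotents -/
def sandwichSet {S : Type v} [Mul S] (e f : S) : Set S :=
  {g | g * g = g ∧ f * g = g ∧ g * e = g ∧ e * g * f = e * f}

/-- a regular semigroup -/
def IsRegular (S : Type v) [Mul S] : Prop :=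
  ∀ s : S, ∃ t : S, s * t * s = s ∧ t * s * t = t

/-- a subsemigroup which is a regular semigroup on its own -/
def RegularIn {S : Type v} [Semigroup S] (T : Subsemigroup S) : Prop :=
  ∀ t ∈ T, ∃ t' ∈ T, t * t' * t = t ∧ t' * t * t' = t'

/-- `S` is weakly generated by `Y`: no proper regular subsemigroup contains `Y` -/
def WeaklyGen {S : Type v} [Semigroup S] (Y : Set S) : Prop :=
  ∀ T : Subsemigroup S, RegularIn T → Y ⊆ ↑T → T = ⊤

section Skeleton

variable {X : Type u} {S : Type v} [Semigroup S]

open Classical in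
/-- the value of `φ : 𝒢 → S¹` at an element `g` of `𝒢'` -/
noncomputable def appG (φ : Letter X → WithOne S) (g : G5 X) : WithOne S :=
  if h : g.IsTup then φ (Sum.inr ⟨g, h⟩) else φ (Sum.inl Anchor.one)

/-- the value of `φ : 𝒢 → S¹` at an anchor -/
def appA (φ : Letter X → WithOne S) (a : Anchor X) : WithOne S := φ (Sum.inl a)

/-- `g^{φ,l} = (g^cφ)((g^{la})'φ)(g^lφ)(g^{la}φ)` -/
noncomputable def phiL (φ : Letter X → WithOne S) (g : G5 X) : WithOne S :=
  appG φ g.ct * appA φ g.la.inv * appG φ g.lt * appA φ g.la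

/-- `g^{φ,r} = ((g^{ra})'φ)(g^rφ)(g^{ra}φ)(g^cφ)` -/
noncomputable def phiR (φ : Letter X → WithOne S) (g : G5 X) : WithOne S :=
  appA φ g.ra.inv * appG φ g.rt * appA φ g.ra * appG φ g.ct

/-- `φ : 𝒢 → S¹` is a skeleton mapping (condition (iii) uses the sandwich set of
two not-necessarily-idempotent elements: `S(a,b) = S(a*a, bb*)` for inverses `a*`, `b*`) -/
def IsSkeleton (φ : Letter X → WithOne S) : Prop :=
  (∀ x : X,
    (∃ s : S, appA φ (.pos x) = (s : WithOne S)) ∧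
    (∃ s : S, appA φ (.neg x) = (s : WithOne S)) ∧
    appA φ (.pos x) * appA φ (.neg x) * appA φ (.pos x) = appA φ (.pos x) ∧
    appA φ (.neg x) * appA φ (.pos x) * appA φ (.neg x) = appA φ (.neg x) ∧
    appG φ (G5.base x) = appA φ (.pos x) * appA φ (.neg x)) ∧
  (∀ a : Anchor X,
    appA φ .one * appA φ a = appA φ a ∧ appA φ a * appA φ .one = appA φ a) ∧
  (∀ (g : G5 X) (i : ℕ), G5.Mem g i → 2 ≤ i →
    ∃ r' l' : WithOne S,
      phiR φ g * r' * phiR φ g = phiR φ g ∧ r' * phiR φ g * r' = r' ∧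
      phiL φ g * l' * phiL φ g = phiL φ g ∧ l' * phiL φ g * l' = l' ∧
      appG φ g ∈ sandwichSet (r' * phiR φ g) (phiL φ g * l'))

end Skeleton

section Proof17

variable {X : Type u} {S : Type v} [Semigroup S]

lemma anchor_inv_inv (a : Anchor X) : a.inv.inv = a := by cases a <;> rfl

lemma not_isTup_one : ¬ (G5.one : G5 X).IsTup := by
  rintro ⟨i, hi, hm⟩
  cases hm with
  | one => omega
  | ofE h => cases h
  | ofD h => cases h

lemma appG_one (φ : Letter X → WithOne S) : appG φ (G5.one : G5 X) = appA φ .one := by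
  rw [appG, dif_neg not_isTup_one]
  rfl

lemma mem_zero {h : G5 X} (hm : G5.Mem h 0) : h = G5.one := by
  cases hm with
  | one => rfl
  | ofE he => cases he
  | ofD hd => cases hd

lemma memE_lt_eq_rt {g : G5 X} {i : ℕ} (h : G5.MemE g i) : g.lt = g.rt := by
  cases h <;> rfl

lemma memE_lt_mem {g : G5 X} {k : ℕ} (h : G5.MemE g (k + 1)) : G5.Mem g.lt k := by
  cases h with
  | base x => exact G5.Mem.one
  | stepL h => exact G5.Mem.ofE h
  | stepR h => exact G5.Mem.ofE h

lemma mem_struct {g : G5 X} {k : ℕ} (h : G5.Mem g (k + 2)) :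
    G5.Mem g.lt (k + 1) ∧ G5.Mem g.rt (k + 1) ∧ G5.Mem g.ct k ∧
    ((g.ct = g.lt.lt ∧ g.la = g.lt.la.inv) ∨ (g.ct = g.lt.rt ∧ g.la = g.lt.ra.inv)) ∧
    ((g.ct = g.rt.lt ∧ g.ra = g.rt.la.inv) ∨ (g.ct = g.rt.rt ∧ g.ra = g.rt.ra.inv)) := by
  cases h with
  | ofE he =>
    cases he with
    | stepL h' =>
      exact ⟨G5.Mem.ofE h', G5.Mem.ofE h', memE_lt_mem h',
        Or.inl ⟨rfl, rfl⟩, Or.inr ⟨memE_lt_eq_rt h', rfl⟩⟩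
    | stepR h' =>
      exact ⟨G5.Mem.ofE h', G5.Mem.ofE h', memE_lt_mem h',
        Or.inr ⟨memE_lt_eq_rt h', rfl⟩, Or.inl ⟨rfl, rfl⟩⟩
  | ofD hd =>
    cases hd with
    | mk hl hc hr hne hla hrb => exact ⟨hl, hr, hc, hla, hrb⟩

lemma absR (x : WithOne S) (s : S) : ∃ t : S, x * (s : WithOne S) = (t : WithOne S) := by
  rcases eq_or_ne x 1 with rfl | hx
  · exact ⟨s, one_mul _⟩
  · obtain ⟨y, rfl⟩ := WithOne.ne_one_iff_exists.mp hx
    exact ⟨y * s, (WithOne.coe_mul y s).symm⟩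

lemma absL (s : S) (x : WithOne S) : ∃ t : S, (s : WithOne S) * x = (t : WithOne S) := by
  rcases eq_or_ne x 1 with rfl | hx
  · exact ⟨s, mul_one _⟩
  · obtain ⟨y, rfl⟩ := WithOne.ne_one_iff_exists.mp hx
    exact ⟨s * y, (WithOne.coe_mul s y).symm⟩

lemma sq_of_mid {M : Type*} [Monoid M] (m x y z : M) (h : m * x * y * z * m = m) :
    (y * z * m * x) * (y * z * m * x) = y * z * m * x := by
  calc (y * z * m * x) * (y * z * m * x)
      = y * z * (m * x * y * z * m) * x := by simp only [mul_assoc]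
    _ = y * z * m * x := by rw [h]

lemma sq_of_mid' {M : Type*} [Monoid M] (m x y z : M) (h : m * x * y * z * m = m) :
    (z * m * x * y) * (z * m * x * y) = z * m * x * y := by
  calc (z * m * x * y) * (z * m * x * y)
      = z * (m * x * y * z * m) * (x * y) := by simp only [mul_assoc]
    _ = z * m * x * y := by rw [h]; simp only [mul_assoc]

lemma base_calc1 {M : Type*} [Monoid M] (P N : M) (hnpn : N * P * N = N) :
    P * N * (P * N) = P * N := by
  calc P * N * (P * N) = P * (N * P * N) := by simp only [mul_assoc]
    _ = P * N := by rw [hnpn]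

lemma base_calc2 {M : Type*} [Monoid M] (P N E : M)
    (hnpn : N * P * N = N) (hNE : N * E = N) (hEE : E * E = E) (hEP : E * P = P) :
    P * N * E * E * E * (P * N) = P * N := by
  calc P * N * E * E * E * (P * N)
      = P * (N * E) * (E * E * (P * N)) := by simp only [mul_assoc]
    _ = P * N * (E * E * (P * N)) := by rw [hNE]
    _ = P * N * (E * (P * N)) := by rw [hEE]
    _ = P * (N * (E * P) * N) := by simp only [mul_assoc]
    _ = P * (N * P * N) := by rw [hEP]
    _ = P * N := by rw [hnpn]

lemma base_calc3 {M : Type*} [Monoid M] (P N E : M)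
    (hnpn : N * P * N = N) (hEN : E * N = N) :
    P * N * P * E * N * (P * N) = P * N := by
  calc P * N * P * E * N * (P * N)
      = P * N * P * (E * N) * (P * N) := by simp only [mul_assoc]
    _ = P * N * P * N * (P * N) := by rw [hEN]
    _ = P * (N * P * N) * (P * N) := by simp only [mul_assoc]
    _ = P * N * (P * N) := by rw [hnpn]
    _ = P * (N * P * N) := by simp only [mul_assoc]
    _ = P * N := by rw [hnpn]

lemma stepA {M : Type*} [Monoid M] (G pl pr c ai l a bi r b l' r' : M)
    (hpl : pl = c * ai * l * a) (hpr : pr = bi * r * b * c)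
    (hplid : pl * pl = pl) (hprid : pr * pr = pr) (hcid : c * c = c)
    (hr1 : pr * r' * pr = pr) (hl1 : pl * l' * pl = pl)
    (hg1 : G * G = G) (hg2 : pl * l' * G = G) (hg3 : G * (r' * pr) = G)
    (hg4 : r' * pr * G * (pl * l') = r' * pr * (pl * l')) :
    G * ai * l * a * G = G ∧ G * bi * r * b * G = G := by
  have hLG : pl * G = G := by
    calc pl * G = pl * (pl * l' * G) := by rw [hg2]
      _ = pl * pl * (l' * G) := by simp only [mul_assoc]
      _ = pl * (l' * G) := by rw [hplid]
      _ = pl * l' * G := by simp only [mul_assoc]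
      _ = G := hg2
  have hGR : G * pr = G := by
    calc G * pr = G * (r' * pr) * pr := by rw [hg3]
      _ = G * (r' * (pr * pr)) := by simp only [mul_assoc]
      _ = G * (r' * pr) := by rw [hprid]
      _ = G := hg3
  have hstar : pr * G * pl = pr * pl := by
    calc pr * G * pl
        = pr * r' * pr * (G * (pl * l' * pl)) := by rw [hl1, hr1]; simp only [mul_assoc]
      _ = pr * (r' * pr * G * (pl * l')) * pl := by simp only [mul_assoc]
      _ = pr * (r' * pr * (pl * l')) * pl := by rw [hg4]
      _ = pr * r' * pr * (pl * l' * pl) := by simp only [mul_assoc]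
      _ = pr * pl := by rw [hl1, hr1]
  have e1 : G * (pr * G * pl) * G = G := by
    calc G * (pr * G * pl) * G = G * pr * (G * (pl * G)) := by simp only [mul_assoc]
      _ = G * pr * (G * G) := by rw [hLG]
      _ = G * pr * G := by rw [hg1]
      _ = G * G := by rw [hGR]
      _ = G := hg1
  have e2 : G * (pr * pl) * G = G := by rw [← hstar]; exact e1
  have e3 : G * (pr * pl) * G = G * bi * r * b * G := by
    calc G * (pr * pl) * G
        = G * (bi * r * b * (c * c) * (ai * l * a)) * G := by
          rw [hpr, hpl]; simp only [mul_assoc]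
      _ = G * (bi * r * b * c * (ai * l * a)) * G := by rw [hcid]
      _ = G * bi * r * b * (pl * G) := by rw [hpl]; simp only [mul_assoc]
      _ = G * bi * r * b * G := by rw [hLG]
  have hA3 : G * bi * r * b * G = G := e3.symm.trans e2
  refine ⟨?_, hA3⟩
  calc G * ai * l * a * G
      = G * pr * (ai * (l * (a * G))) := by rw [hGR]; simp only [mul_assoc]
    _ = G * (bi * r * b * (c * (ai * l * a)) * G) := by rw [hpr]; simp only [mul_assoc]
    _ = G * (bi * r * b * (pl * G)) := by rw [hpl]; simp only [mul_assoc]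
    _ = G * (bi * r * b * G) := by rw [hLG]
    _ = G * bi * r * b * G := by simp only [mul_assoc]
    _ = G := hA3

/-- The key facts about `gφ` for `g ∈ 𝒢_i`, `i ≥ 1`. -/
def AFacts (φ : Letter X → WithOne S) (g : G5 X) : Prop :=
  (∃ s : S, appG φ g = (s : WithOne S)) ∧
  appG φ g * appG φ g = appG φ g ∧
  appG φ g * appA φ g.la.inv * appG φ g.lt * appA φ g.la * appG φ g = appG φ g ∧
  appG φ g * appA φ g.ra.inv * appG φ g.rt * appA φ g.ra * appG φ g = appG φ g

lemma phiL_idem_of (φ : Letter X → WithOne S) (g : G5 X)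
    (hLC : (g.ct = g.lt.lt ∧ g.la = g.lt.la.inv) ∨ (g.ct = g.lt.rt ∧ g.la = g.lt.ra.inv))
    (hA : AFacts φ g.lt) : phiL φ g * phiL φ g = phiL φ g := by
  obtain ⟨-, -, h2, h3⟩ := hA
  have hdef : phiL φ g = appG φ g.ct * appA φ g.la.inv * appG φ g.lt * appA φ g.la := rfl
  rcases hLC with ⟨hc, ha⟩ | ⟨hc, ha⟩
  · rw [hdef, hc, ha, anchor_inv_inv]
    exact sq_of_mid _ _ _ _ h2
  · rw [hdef, hc, ha, anchor_inv_inv]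
    exact sq_of_mid _ _ _ _ h3

lemma phiR_idem_of (φ : Letter X → WithOne S) (g : G5 X)
    (hRC : (g.ct = g.rt.lt ∧ g.ra = g.rt.la.inv) ∨ (g.ct = g.rt.rt ∧ g.ra = g.rt.ra.inv))
    (hA : AFacts φ g.rt) : phiR φ g * phiR φ g = phiR φ g := by
  obtain ⟨-, -, h2, h3⟩ := hA
  have hdef : phiR φ g = appA φ g.ra.inv * appG φ g.rt * appA φ g.ra * appG φ g.ct := rfl
  rcases hRC with ⟨hc, hb⟩ | ⟨hc, hb⟩
  · rw [hdef, hc, hb, anchor_inv_inv]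
    exact sq_of_mid' _ _ _ _ h2
  · rw [hdef, hc, hb, anchor_inv_inv]
    exact sq_of_mid' _ _ _ _ h3

lemma keyA (φ : Letter X → WithOne S) (hφ : IsSkeleton φ) :
    ∀ (i : ℕ) (g : G5 X), G5.Mem g i → 1 ≤ i → AFacts φ g := by
  intro i
  induction i using Nat.strong_induction_on with
  | _ i IH =>
    intro g hg h1
    cases i with
    | zero => exact absurd h1 (by omega)
    | succ j =>
      cases j with
      | zero =>
        -- i = 1
        cases hg with
        | ofE he =>
          cases he with
          | base x =>
            obtain ⟨⟨sp, hsp⟩, ⟨sn, hsn⟩, hpnp, hnpn, hb⟩ := hφ.1 x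
            have hone := hφ.2.1
            refine ⟨⟨sp * sn, ?_⟩, ?_, ?_, ?_⟩
            · rw [hb, hsp, hsn]
              exact (WithOne.coe_mul sp sn).symm
            · rw [hb]
              exact base_calc1 _ _ hnpn
            · show appG φ (G5.base x) * appA φ Anchor.one * appG φ G5.one *
                  appA φ Anchor.one * appG φ (G5.base x) = appG φ (G5.base x)
              rw [appG_one, hb]
              exact base_calc2 _ _ _ hnpn (hone (Anchor.neg x)).2 (hone Anchor.one).1
                (hone (Anchor.pos x)).1
            · show appG φ (G5.base x) * appA φ (Anchor.pos x) * appG φ G5.one *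
                  appA φ (Anchor.neg x) * appG φ (G5.base x) = appG φ (G5.base x)
              rw [appG_one, hb]
              exact base_calc3 _ _ _ hnpn (hone (Anchor.neg x)).1
          | stepL h' => cases h'
          | stepR h' => cases h'
        | ofD hd => cases hd
      | succ k =>
        -- i = k + 2
        obtain ⟨hl, hr, hc, hLC, hRC⟩ := mem_struct (k := k) hg
        have hAl : AFacts φ g.lt := IH (k + 1) (by omega) g.lt hl (by omega)
        have hAr : AFacts φ g.rt := IH (k + 1) (by omega) g.rt hr (by omega)
        have hcid : appG φ g.ct * appG φ g.ct = appG φ g.ct := by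
          cases k with
          | zero =>
            rw [mem_zero hc, appG_one]
            exact (hφ.2.1 Anchor.one).1
          | succ m => exact (IH (m + 1) (by omega) g.ct hc (by omega)).2.1
        have hplid := phiL_idem_of φ g hLC hAl
        have hprid := phiR_idem_of φ g hRC hAr
        obtain ⟨r', l', hr1, hr2, hl1, hl2, hsw⟩ := hφ.2.2 g (k + 1 + 1) hg (by omega)
        obtain ⟨hg1, hg2, hg3, hg4⟩ := hsw
        have hstep := stepA (appG φ g) (phiL φ g) (phiR φ g) (appG φ g.ct)
          (appA φ g.la.inv) (appG φ g.lt) (appA φ g.la)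
          (appA φ g.ra.inv) (appG φ g.rt) (appA φ g.ra) l' r'
          rfl rfl hplid hprid hcid hr1 hl1 hg1 hg2 hg3 hg4
        refine ⟨?_, hg1, hstep.1, hstep.2⟩
        obtain ⟨sL, hsL⟩ := hAl.1
        obtain ⟨t1, ht1⟩ := absR (appG φ g.ct * appA φ g.la.inv) sL
        obtain ⟨t2, ht2⟩ := absL t1 (appA φ g.la)
        have hPLS : phiL φ g = (t2 : WithOne S) := by
          have hdef : phiL φ g =
              appG φ g.ct * appA φ g.la.inv * appG φ g.lt * appA φ g.la := rfl
          rw [hdef, hsL, ht1, ht2]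
        obtain ⟨u1, hu1⟩ := absL t2 l'
        obtain ⟨u2, hu2⟩ := absL u1 (appG φ g)
        exact ⟨u2, by rw [← hg2, hPLS, hu1, hu2]⟩

end Proof17

/-- For a skeleton mapping `φ`, the elements `g^{φ,l}` and `g^{φ,r}` are idempotents
of `S`. -/
theorem statement17 (X : Type u) [Nonempty X] (S : Type v) [Semigroup S]
    (φ : Letter X → WithOne S) (hφ : IsSkeleton φ)
    (g : G5 X) (i : ℕ) (hg : G5.Mem g i) (h2 : 2 ≤ i) :
    (∃ s : S, phiL φ g = (s : WithOne S)) ∧ phiL φ g * phiL φ g = phiL φ g ∧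
    (∃ s : S, phiR φ g = (s : WithOne S)) ∧ phiR φ g * phiR φ g = phiR φ g := by
  obtain ⟨k, rfl⟩ : ∃ k, i = k + 2 := ⟨i - 2, by omega⟩
  obtain ⟨hl, hr, hc, hLC, hRC⟩ := mem_struct hg
  have hAl := keyA φ hφ (k + 1) g.lt hl (by omega)
  have hAr := keyA φ hφ (k + 1) g.rt hr (by omega)
  refine ⟨?_, phiL_idem_of φ g hLC hAl, ?_, phiR_idem_of φ g hRC hAr⟩
  · obtain ⟨sL, hsL⟩ := hAl.1
    obtain ⟨t1, ht1⟩ := absR (appG φ g.ct * appA φ g.la.inv) sL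
    obtain ⟨t2, ht2⟩ := absL t1 (appA φ g.la)
    exact ⟨t2, by
      rw [show phiL φ g =
        appG φ g.ct * appA φ g.la.inv * appG φ g.lt * appA φ g.la from rfl, hsL, ht1, ht2]⟩
  · obtain ⟨sR, hsR⟩ := hAr.1
    obtain ⟨u1, hu1⟩ := absR (appA φ g.ra.inv) sR
    obtain ⟨u2, hu2⟩ := absL u1 (appA φ g.ra)
    obtain ⟨u3, hu3⟩ := absL u2 (appG φ g.ct)
    exact ⟨u3, by
      rw [show phiR φ g =
        appA φ g.ra.inv * appG φ g.rt * appA φ g.ra * appG φ g.ct from rfl, hsR, hu1, hu2, hu3]⟩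

end Paper
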